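/- arXiv:0706.4112 — 2 statements merged into one kernel-verified Lean document; each statement's English description precedes it below -/
import Mathlib

section
/- For every real ε with 0 < ε < 1/2, every graph H on k vertices, and every H-free graph G = (V,E) on n ≥ 2 vertices, there are disjoint subsets A and B of V with |A|, |B| ≥ ε^{k−1}·n/k such that either every vertex in A has at most ε·|B| neighbors in B, or every vertex in A has at least (1−ε)·|B| neighbors in B. -/
/-!
Greedy embedding. Split the vertices into `k` candidate sets of size `m = ⌊n/k⌋`, one for each
vertex of `H`. At step `t`, look for a candidate `v` for the vertex `t` that, for every later `j`,
sees at least an `ε`-fraction of the candidates for `j` as `H` prescribes (adjacent iff `tj ∈ H`);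
embed `t` as `v` and keep only those candidates. As `G` is `H`-free this fails at some step: then
every candidate for `t` has a later vertex `j` it sees wrongly, by pigeonhole one `j` serves a
`1/(k-1-t)` fraction `A` of them, and `A` with the candidates `B` for `j` is sparse or dense.
Both have size at least `ε^t m / (k-1-t) ≥ 2 ε^(k-1) m ≥ ε^(k-1) n / k`, as `2 s ε^s ≤ 1`
for `ε ≤ 1/2`.
-/

open scoped Classical

open Finset Function

lemma Nat.two_mul_le_two_pow (s : ℕ) : 2 * s ≤ 2 ^ s := by
  cases s with
  | zero => simp
  | succ s =>
    have := s.lt_two_pow_self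
    rw [pow_succ]
    omega

lemma two_mul_pow_mul_le_div {ε X : ℝ} (hε₀ : 0 ≤ ε) (hε : ε ≤ 1 / 2) (hX : 0 ≤ X) {s : ℕ}
    (hs : 0 < s) : 2 * ε ^ s * X ≤ X / s := by
  have hpow : 2 * s * ε ^ s ≤ 1 :=
    calc 2 * s * ε ^ s ≤ 2 ^ s * (1 / 2) ^ s := by
          gcongr
          exact_mod_cast Nat.two_mul_le_two_pow s
      _ = 1 := by rw [← mul_pow]; norm_num
  rw [le_div_iff₀ (by positivity)]
  nlinarith

lemma Finset.exists_pairwise_disjoint_card_eq {V : Type*} [Fintype V] (k m : ℕ)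
    (h : k * m ≤ Fintype.card V) :
    ∃ W : Fin k → Finset V, Pairwise (Disjoint on W) ∧ ∀ j, (W j).card = m := by
  obtain ⟨e⟩ := Embedding.nonempty_of_card_le (α := Fin k × Fin m) (β := V) (by simpa using h)
  refine ⟨fun j => ({j} ×ˢ univ).map e, fun i j hij => ?_, fun j => by simp⟩
  exact (disjoint_map e).mpr (disjoint_product.mpr (.inl (disjoint_singleton.mpr hij)))

namespace SimpleGraph

variable {V : Type*}

def IsHomogeneousPair (G : SimpleGraph V) (ε : ℝ) (A B : Finset V) : Prop :=
  (∀ a ∈ A, ((B.filter (G.Adj a)).card : ℝ) ≤ ε * B.card) ∨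
    (∀ a ∈ A, ((B.filter (G.Adj a)).card : ℝ) ≥ (1 - ε) * B.card)

lemma isHomogeneousPair_singleton {G : SimpleGraph V} {ε : ℝ} (hε : 0 ≤ ε) (x y : V) :
    G.IsHomogeneousPair ε {x} {y} := by
  by_cases hxy : G.Adj x y
  · right
    simp [filter_singleton, hxy, hε]
  · left
    simp [filter_singleton, hxy, hε]

lemma isHomogeneousPair_of_card_filter_adj_iff_le {G : SimpleGraph V} {ε : ℝ} {A B : Finset V}
    (p : Prop) (h : ∀ a ∈ A, ((B.filter fun y => G.Adj a y ↔ p).card : ℝ) ≤ ε * B.card) :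
    G.IsHomogeneousPair ε A B := by
  by_cases hp : p
  · left
    simpa [hp] using h
  · right
    intro a ha
    have hsplit := card_filter_add_card_filter_not (s := B) (G.Adj a)
    have := h a ha
    simp only [hp, iff_false] at this
    rw [← hsplit] at this ⊢
    push_cast at this ⊢
    linarith

/-- The greedy embedding of `H` after `t` steps: `W a` is `{image of a}` for `a < t`, and the set of
candidates for `a` for `a ≥ t`. -/
structure Candidates {k : ℕ} (H : SimpleGraph (Fin k)) (G : SimpleGraph V) (ε μ : ℝ) (t : ℕ)
    (W : Fin k → Finset V) : Prop where
  pairwise_disjoint : Pairwise (Disjoint on W)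
  card_eq_one : ∀ a : Fin k, (a : ℕ) < t → (W a).card = 1
  le_card : ∀ j : Fin k, t ≤ (j : ℕ) → ε ^ t * μ ≤ (W j).card
  adj_iff : ∀ a b : Fin k, (a : ℕ) < t → a < b → ∀ x ∈ W a, ∀ y ∈ W b, (G.Adj x y ↔ H.Adj a b)


variable {k : ℕ} {H : SimpleGraph (Fin k)} {G : SimpleGraph V} {ε μ : ℝ} {W : Fin k → Finset V}

noncomputable def refineCandidates (H : SimpleGraph (Fin k)) (G : SimpleGraph V)
    (W : Fin k → Finset V) (t : Fin k) (v : V) : Fin k → Finset V := fun j =>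
  if j < t then W j else if j = t then {v} else (W j).filter fun y => G.Adj v y ↔ H.Adj t j

section refineCandidates

variable {t j : Fin k} {v : V}

lemma refineCandidates_of_lt (h : j < t) : refineCandidates H G W t v j = W j := if_pos h

@[simp]
lemma refineCandidates_self : refineCandidates H G W t v t = {v} := by
  simp [refineCandidates]

lemma refineCandidates_of_gt (h : t < j) :
    refineCandidates H G W t v j = (W j).filter fun y => G.Adj v y ↔ H.Adj t j := by
  simp [refineCandidates, h.not_gt, h.ne']

lemma refineCandidates_subset (hv : v ∈ W t) : refineCandidates H G W t v j ⊆ W j := by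
  rcases lt_trichotomy j t with h | rfl | h
  · rw [refineCandidates_of_lt h]
  · simpa using hv
  · rw [refineCandidates_of_gt h]
    exact filter_subset _ _

end refineCandidates

namespace Candidates

theorem nonempty_embedding (hW : Candidates H G ε μ k W) : Nonempty (H ↪g G) := by
  choose f hf using fun a : Fin k => Finset.card_eq_one.mp (hW.card_eq_one a a.is_lt)
  have hinj : Function.Injective f := fun a b hab => by
    by_contra hne
    simpa [onFun, hf, hab] using hW.pairwise_disjoint hne
  refine ⟨⟨⟨f, hinj⟩, fun {a b} => ?_⟩⟩
  rcases lt_trichotomy a b with h | rfl | h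
  · exact hW.adj_iff a b a.is_lt h _ (by simp [hf]) _ (by simp [hf])
  · simp
  · rw [G.adj_comm, H.adj_comm]
    exact hW.adj_iff b a b.is_lt h _ (by simp [hf]) _ (by simp [hf])

theorem refine {t : Fin k} (hW : Candidates H G ε μ t W) (hε : 0 ≤ ε) {v : V} (hv : v ∈ W t)
    (hgood : ∀ j, t < j →
      ε * (W j).card ≤ ((W j).filter fun y => G.Adj v y ↔ H.Adj t j).card) :
    Candidates H G ε μ (t + 1) (refineCandidates H G W t v) where
  pairwise_disjoint i j hij :=
    (hW.pairwise_disjoint hij).mono (refineCandidates_subset hv) (refineCandidates_subset hv)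
  card_eq_one a ha := by
    rcases (Nat.lt_succ_iff.mp ha).lt_or_eq with ha | ha
    · rw [refineCandidates_of_lt ha]
      exact hW.card_eq_one a ha
    · simp [Fin.ext ha]
  le_card j hj := by
    have htj : t < j := by omega
    rw [refineCandidates_of_gt htj, pow_succ, mul_right_comm, mul_comm _ ε]
    exact (mul_le_mul_of_nonneg_left (hW.le_card j htj.le) hε).trans (hgood j htj)
  adj_iff a b ha hab x hx y hy := by
    rcases (Nat.lt_succ_iff.mp ha).lt_or_eq with ha | ha
    · exact hW.adj_iff a b ha hab x (refineCandidates_subset hv hx) y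
        (refineCandidates_subset hv hy)
    · obtain rfl : a = t := Fin.ext ha
      rw [refineCandidates_self, mem_singleton] at hx
      rw [refineCandidates_of_gt hab, mem_filter] at hy
      exact hx ▸ hy.2

theorem exists_isHomogeneousPair_of_forall_exists_lt {t : Fin k} (hW : Candidates H G ε μ t W)
    (hε₀ : 0 < ε) (hε : ε ≤ 1 / 2) (hμ : 0 < μ)
    (hbad : ∀ v ∈ W t, ∃ j, t < j ∧
      (((W j).filter fun y => G.Adj v y ↔ H.Adj t j).card : ℝ) < ε * (W j).card) :
    ∃ A B : Finset V, Disjoint A B ∧ 2 * ε ^ (k - 1) * μ ≤ A.card ∧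
      2 * ε ^ (k - 1) * μ ≤ B.card ∧ G.IsHomogeneousPair ε A B := by
  have : Nonempty (Fin k) := ⟨t⟩
  choose! next hnext using hbad
  have hWt : ε ^ (t : ℕ) * μ ≤ (W t).card := hW.le_card t le_rfl
  obtain ⟨v, hv⟩ : (W t).Nonempty := by
    rw [← card_pos]
    exact_mod_cast (by positivity : (0 : ℝ) < ε ^ (t : ℕ) * μ).trans_le hWt
  have hmaps : ∀ v ∈ W t, next v ∈ Ioi t := fun v hv => mem_Ioi.mpr (hnext v hv).1
  have hs : 0 < (Ioi t).card := card_pos.mpr ⟨_, hmaps v hv⟩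
  obtain ⟨j, hj, hA⟩ := exists_le_card_fiber_of_nsmul_le_card_of_maps_to hmaps ⟨_, hmaps v hv⟩
    (b := ε ^ (t : ℕ) * μ / (Ioi t).card)
    (by rwa [nsmul_eq_mul, mul_div_cancel₀ _ (by positivity)])
  have hbound : 2 * ε ^ (k - 1) * μ ≤ ε ^ (t : ℕ) * μ / (Ioi t).card := by
    have hk : k - 1 = (Ioi t).card + t := by rw [Fin.card_Ioi]; omega
    rw [hk, pow_add, mul_assoc, mul_assoc, ← mul_assoc]
    exact two_mul_pow_mul_le_div hε₀.le hε (by positivity) hs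
  refine ⟨(W t).filter (next · = j), W j,
    (hW.pairwise_disjoint (mem_Ioi.mp hj).ne).mono_left (filter_subset _ _), hbound.trans hA,
    ?_, ?_⟩
  · calc 2 * ε ^ (k - 1) * μ ≤ ε ^ (t : ℕ) * μ / (Ioi t).card := hbound
      _ ≤ ε ^ (t : ℕ) * μ := div_le_self (by positivity) (by exact_mod_cast hs)
      _ ≤ (W j).card := hW.le_card j (mem_Ioi.mp hj).le
  · refine isHomogeneousPair_of_card_filter_adj_iff_le (H.Adj t j) fun a ha => ?_
    obtain ⟨haW, rfl⟩ := mem_filter.mp ha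
    exact (hnext a haW).2.le

theorem exists_isHomogeneousPair (hfree : IsEmpty (H ↪g G)) (hε₀ : 0 < ε) (hε : ε ≤ 1 / 2)
    (hμ : 0 < μ) {t : ℕ} {W : Fin k → Finset V} (ht : t ≤ k) (hW : Candidates H G ε μ t W) :
    ∃ A B : Finset V, Disjoint A B ∧ 2 * ε ^ (k - 1) * μ ≤ A.card ∧
      2 * ε ^ (k - 1) * μ ≤ B.card ∧ G.IsHomogeneousPair ε A B := by
  obtain ht | rfl := ht.lt_or_eq
  · obtain ⟨t, rfl⟩ : ∃ t' : Fin k, (t' : ℕ) = t := ⟨⟨t, ht⟩, rfl⟩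
    by_cases hgood : ∃ v ∈ W t, ∀ j, t < j →
        ε * (W j).card ≤ ((W j).filter fun y => G.Adj v y ↔ H.Adj t j).card
    · obtain ⟨v, hv, hgood⟩ := hgood
      exact (hW.refine hε₀.le hv hgood).exists_isHomogeneousPair hfree hε₀ hε hμ ht
    · push Not at hgood
      exact hW.exists_isHomogeneousPair_of_forall_exists_lt hε₀ hε hμ hgood
  · exact (hfree.false hW.nonempty_embedding.some).elim
termination_by k - t

end Candidates

end SimpleGraph

open SimpleGraph in
theorem stmt7 :
    ∀ ε : ℝ, 0 < ε → ε < 1 / 2 →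
    ∀ (k : ℕ) (H : SimpleGraph (Fin k)),
    ∀ n : ℕ, 2 ≤ n →
    ∀ G : SimpleGraph (Fin n), IsEmpty (H ↪g G) →
    ∃ A B : Finset (Fin n), Disjoint A B ∧
      (A.card : ℝ) ≥ ε ^ (k - 1) * n / k ∧
      (B.card : ℝ) ≥ ε ^ (k - 1) * n / k ∧
      ((∀ a ∈ A, ((B.filter (G.Adj a)).card : ℝ) ≤ ε * B.card) ∨
       (∀ a ∈ A, ((B.filter (G.Adj a)).card : ℝ) ≥ (1 - ε) * B.card)) := by
  intro ε hε hε2 k H n hn G hfree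
  have hdiv : (n : ℝ) / k < (n / k : ℕ) + 1 := by
    simpa only [Nat.floor_div_eq_div] using Nat.lt_floor_add_one ((n : ℝ) / k)
  simp_rw [mul_div_assoc]
  obtain hm | hm := (n / k).eq_zero_or_pos
  -- the required size is then below `1`, so two singletons do
  · have hsmall : ε ^ (k - 1) * (n / k) ≤ 1 :=
      mul_le_one₀ (pow_le_one₀ hε.le (by linarith)) (by positivity) (by simpa [hm] using hdiv.le)
    refine ⟨{⟨0, by omega⟩}, {⟨1, by omega⟩}, disjoint_singleton.mpr (by simp [Fin.ext_iff]),
      by simpa using hsmall, by simpa using hsmall, isHomogeneousPair_singleton hε.le _ _⟩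
  · obtain ⟨W, hWdisj, hWcard⟩ :=
      exists_pairwise_disjoint_card_eq (V := Fin n) k (n / k) (by simpa using Nat.mul_div_le n k)
    have hW : Candidates H G ε (n / k : ℕ) 0 W := ⟨hWdisj, by simp, by simp [hWcard], by simp⟩
    obtain ⟨A, B, hAB, hA, hB, hhom⟩ :=
      hW.exists_isHomogeneousPair hfree hε hε2.le (by exact_mod_cast hm) k.zero_le
    have hbound : ε ^ (k - 1) * (n / k) ≤ 2 * ε ^ (k - 1) * (n / k : ℕ) := by
      have : (1 : ℝ) ≤ (n / k : ℕ) := by exact_mod_cast hm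
      rw [mul_comm 2, mul_assoc]
      gcongr
      linarith
    exact ⟨A, B, hAB, hbound.trans hA, hbound.trans hB, hhom⟩
end

section
/- If a sequence of graphs (G₁, …, G_r) on a common vertex set V is (αρ/2, ρ', ε, t)-sparse and (α, ρ, ε/4, 2)-sparse, then (G₁, …, G_r) is also (α, ρρ'/2, ε, 2t)-sparse. -/
open scoped Classical

/-- `e(A,B)`: the number of pairs `(a,b) ∈ A × B` that are edges of `G`. -/
noncomputable def pairEdges {V : Type*} (G : SimpleGraph V) (A B : Finset V) : ℕ :=
  ((A ×ˢ B).filter fun p => G.Adj p.1 p.2).card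

/-- The density `d_G(W₁, …, W_t) = (Σ_{i<j} e(W_i, W_j)) / (Σ_{i<j} |W_i||W_j|)`
between the parts of an indexed family of vertex subsets; for `t = 1` both sums are
empty and the density is `0/0 = 0`. -/
noncomputable def seqDensity {V : Type*} (G : SimpleGraph V) {t : ℕ}
    (W : Fin t → Finset V) : ℝ :=
  (∑ p ∈ Finset.univ.filter (fun p : Fin t × Fin t => p.1 < p.2),
      (pairEdges G (W p.1) (W p.2) : ℝ)) /
    (∑ p ∈ Finset.univ.filter (fun p : Fin t × Fin t => p.1 < p.2),
      ((W p.1).card : ℝ) * ((W p.2).card : ℝ))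

/-- A sequence `(G 1, …, G r)` of graphs on a common vertex set `V` is
`(α, ρ, ε, t)`-sparse if for every `U ⊆ V` with `|U| ≥ α|V|` there are positive
integers `t₁, …, t_r` with `∏ tᵢ ≥ t` such that for each `i` there are disjoint
subsets `W_{i,1}, …, W_{i,tᵢ} ⊆ U`, all of size `⌈ρ|U|⌉`, with
`d_{G i}(W_{i,1}, …, W_{i,tᵢ}) ≤ ε`. -/
def IsSparse {V : Type*} [Fintype V] {r : ℕ} (G : Fin r → SimpleGraph V)
    (α ρ ε : ℝ) (t : ℕ) : Prop :=
  ∀ U : Finset V, (U.card : ℝ) ≥ α * Fintype.card V →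
    ∃ ts : Fin r → ℕ, (∀ i, 0 < ts i) ∧ t ≤ ∏ i, ts i ∧
      ∀ i : Fin r, ∃ W : Fin (ts i) → Finset V,
        (∀ a, W a ⊆ U) ∧
        (∀ a b, a ≠ b → Disjoint (W a) (W b)) ∧
        (∀ a, (W a).card = ⌈ρ * (U.card : ℝ)⌉₊) ∧
        seqDensity (G i) W ≤ ε

/-!
Apply `(α, ρ, ε/4, 2)`-sparseness to `U`: some graph `G i₀` has two disjoint sets `U₁, U₂ ⊆ U`
of size `m = ⌈ρ|U|⌉` with `d(U₁, U₂) ≤ ε/4`. Cover each `Uⱼ` greedily by windows of size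
`w = ⌈ρ|U|/2⌉ ≥ αρ|V|/2`, apply `(αρ/2, ρ', ε, t)`-sparseness inside each window and remove the
parts of the `i₀`-th family found there; the removed parts cover at least `m/2` vertices of `Uⱼ`.
Averaging the at most `ε m²/4` edges between `U₁` and `U₂` over pairs of windows gives one window
on each side whose `i₀`-supports have density at most `ε`. Appending the longer of the two
`i₀`-families to the other system doubles its `i₀`-th length, hence the product of the lengths,
and keeps every density at most `ε`. Finally the parts, of size `⌈ρ'w⌉ ≥ ⌈ρρ'|U|/2⌉`, are
shrunk one vertex at a time; for a suitable vertex this never increases the sum of the pairwise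
densities of the parts.
-/

open Finset

section PairSum

variable {M : Type*} [AddCommMonoid M]

def pairSum {k : ℕ} (f : Fin k → Fin k → M) : M :=
  ∑ p ∈ univ.filter (fun p : Fin k × Fin k => p.1 < p.2), f p.1 p.2

def numPairs (k : ℕ) : ℕ := #(univ.filter fun p : Fin k × Fin k => p.1 < p.2)

lemma pairSum_eq_sum_sum_ite {k : ℕ} (f : Fin k → Fin k → M) :
    pairSum f = ∑ p, ∑ q, if p < q then f p q else 0 := by
  rw [pairSum, sum_filter, ← univ_product_univ, sum_product]

lemma pairSum_const {k : ℕ} (x : M) : pairSum (fun _ _ : Fin k => x) = numPairs k • x :=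
  sum_const x

lemma pairSum_eq_zero_of_numPairs_eq_zero {k : ℕ} (f : Fin k → Fin k → M) (hk : numPairs k = 0) :
    pairSum f = 0 := by
  rw [pairSum, card_eq_zero.1 hk, sum_empty]

lemma pairSum_append {a b : ℕ} (f : Fin (a + b) → Fin (a + b) → M) :
    pairSum f = pairSum (fun p q => f (Fin.castAdd b p) (Fin.castAdd b q))
      + pairSum (fun p q => f (Fin.natAdd a p) (Fin.natAdd a q))
      + ∑ p, ∑ q, f (Fin.castAdd b p) (Fin.natAdd a q) := by
  have h₁ (p : Fin a) (q : Fin b) : Fin.castAdd b p < Fin.natAdd a q :=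
    Fin.lt_def.2 (by rw [Fin.val_castAdd, Fin.val_natAdd]; omega)
  have h₂ (p : Fin b) (q : Fin a) : ¬ Fin.natAdd a p < Fin.castAdd b q := by
    rw [Fin.lt_def, Fin.val_castAdd, Fin.val_natAdd]
    omega
  have h₃ (p q : Fin a) : Fin.castAdd b p < Fin.castAdd b q ↔ p < q := Iff.rfl
  simp only [pairSum_eq_sum_sum_ite, Fin.sum_univ_add, sum_add_distrib, h₁, h₂, h₃, if_true,
    if_false, Fin.natAdd_lt_natAdd_iff, sum_const_zero, add_zero]
  abel

lemma numPairs_add (a b : ℕ) : numPairs (a + b) = numPairs a + numPairs b + a * b := by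
  have h := pairSum_append (a := a) (b := b) (fun _ _ => 1)
  rw [pairSum_const, pairSum_const, pairSum_const] at h
  simpa [mul_comm] using h

end PairSum

lemma exists_pairwiseDisjoint_card_lt_add_sum {α : Type*} [DecidableEq α] (P : Finset α → Prop)
    (w : ℕ) (R : Finset α) (hP : ∀ W ⊆ R, #W = w → ∃ B ⊆ W, B.Nonempty ∧ P B) :
    ∃ 𝒞 : Finset (Finset α), (∀ B ∈ 𝒞, B ⊆ R ∧ P B) ∧ (𝒞 : Set (Finset α)).PairwiseDisjoint id ∧
      #R < w + ∑ B ∈ 𝒞, #B := by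
  induction hn : #R using Nat.strong_induction_on generalizing R with
  | _ n ih =>
  by_cases hR : #R < w
  · exact ⟨∅, by simp, by simp, by simpa [hn] using hR⟩
  obtain ⟨W, hWR, hW⟩ := exists_subset_card_eq (not_lt.1 hR)
  obtain ⟨B, hBW, hB, hPB⟩ := hP W hWR hW
  have hBR := hBW.trans hWR
  have hlt : #(R \ B) < n := hn ▸ card_lt_card (sdiff_ssubset hBR hB)
  obtain ⟨𝒞, h𝒞, hdisj, hcard⟩ :=
    ih _ hlt (R \ B) (fun W' hW' => hP W' (hW'.trans sdiff_subset)) rfl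
  have hB𝒞 : ∀ C ∈ 𝒞, Disjoint B C := fun C hC =>
    disjoint_of_subset_right (h𝒞 C hC).1 disjoint_sdiff
  have hnot : B ∉ 𝒞 := fun h => hB.ne_empty (disjoint_self.1 (hB𝒞 B h))
  refine ⟨insert B 𝒞, ?_, ?_, ?_⟩
  · simp only [mem_insert, forall_eq_or_imp]
    exact ⟨⟨hBR, hPB⟩, fun C hC => ⟨(h𝒞 C hC).1.trans sdiff_subset, (h𝒞 C hC).2⟩⟩
  · rw [coe_insert]
    exact hdisj.insert fun C hC _ => hB𝒞 C hC
  · rw [sum_insert hnot, ← hn]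
    rw [card_sdiff_of_subset hBR] at hcard
    have := card_le_card hBR
    omega

lemma exists_two_le_of_two_le_prod {ι : Type*} [Fintype ι] {f : ι → ℕ} (h : 2 ≤ ∏ i, f i) :
    ∃ i, 2 ≤ f i := by
  by_contra! hf
  have : ∏ i, f i ≤ 1 := prod_le_one (fun _ _ => Nat.zero_le _) fun i _ => Nat.le_of_lt_succ (hf i)
  omega

lemma two_mul_ceil_half_le {x : ℝ} (hx : 0 ≤ x) : 2 * ⌈x / 2⌉₊ ≤ ⌈x⌉₊ + 2 := by
  have h₁ := Nat.ceil_lt_add_one (by positivity : 0 ≤ x / 2)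
  have h₂ := Nat.le_ceil x
  have : (2 * ⌈x / 2⌉₊ : ℝ) < ⌈x⌉₊ + 2 := by linarith
  exact_mod_cast this.le

section EdgeCounts

variable {V : Type*} (H : SimpleGraph V)

lemma pairEdges_eq_card_interedges (A B : Finset V) : pairEdges H A B = #(H.interedges A B) := rfl

lemma pairEdges_eq_sum_card_neighbors (A B : Finset V) :
    pairEdges H A B = ∑ a ∈ A, #{b ∈ B | H.Adj a b} := by
  rw [pairEdges, card_filter, sum_product]
  simp only [card_filter]

lemma cast_edgeDensity (A B : Finset V) :
    (H.edgeDensity A B : ℝ) = pairEdges H A B / (#A * #B) := by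
  rw [SimpleGraph.edgeDensity_def]
  push_cast
  rfl

lemma pairEdges_biUnion {ι κ : Type*} {s : Finset ι} {t : Finset κ} {f : ι → Finset V}
    {g : κ → Finset V} (hf : (s : Set ι).PairwiseDisjoint f) (hg : (t : Set κ).PairwiseDisjoint g) :
    pairEdges H (s.biUnion f) (t.biUnion g) = ∑ i ∈ s, ∑ j ∈ t, pairEdges H (f i) (g j) := by
  rw [pairEdges_eq_card_interedges, SimpleGraph.interedges_biUnion, card_biUnion, sum_product]
  · rfl
  rintro ⟨i, j⟩ hij ⟨i', j'⟩ hij' hne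
  simp only [mem_coe, mem_product] at hij hij'
  refine disjoint_left.2 fun e he he' => ?_
  rw [SimpleGraph.mem_interedges_iff] at he he'
  obtain hi | hi := eq_or_ne i i'
  · subst hi
    have hj : j ≠ j' := fun hj => hne (by rw [hj])
    exact disjoint_left.1 (hg hij.2 hij'.2 hj) he.2.1 he'.2.1
  · exact disjoint_left.1 (hf hij.1 hij'.1 hi) he.1 he'.1

lemma sum_pairEdges_erase_left (A B : Finset V) :
    ∑ x ∈ A, (pairEdges H (A.erase x) B : ℝ) = (#A - 1) * pairEdges H A B := by
  simp only [pairEdges_eq_sum_card_neighbors, Nat.cast_sum]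
  rw [sum_congr rfl fun x hx => sum_erase_eq_sub hx, sum_sub_distrib, sum_const, nsmul_eq_mul]
  ring

/-- Equality holds unless `#A = 1`. -/
lemma sum_edgeDensity_erase_left_le (A B : Finset V) :
    ∑ x ∈ A, (H.edgeDensity (A.erase x) B : ℝ) ≤ #A * H.edgeDensity A B := by
  obtain rfl | hA := A.eq_empty_or_nonempty
  · simp
  have hcard : ∀ x ∈ A, (#(A.erase x) : ℝ) = #A - 1 := fun x hx => by
    rw [card_erase_of_mem hx, Nat.cast_pred hA.card_pos]
  simp only [cast_edgeDensity]
  rw [sum_congr rfl fun x hx => by rw [hcard x hx], ← sum_div, sum_pairEdges_erase_left,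
    ← mul_div_assoc, mul_div_mul_left _ _ (by positivity : (#A : ℝ) ≠ 0)]
  obtain h | h := eq_or_ne (#A - 1 : ℝ) 0
  · rw [h, zero_mul, zero_div]
    positivity
  · rw [mul_div_mul_left _ _ h]

lemma sum_edgeDensity_erase_right_le (A B : Finset V) :
    ∑ x ∈ B, (H.edgeDensity A (B.erase x) : ℝ) ≤ #B * H.edgeDensity A B := by
  simpa only [SimpleGraph.edgeDensity_comm H A] using sum_edgeDensity_erase_left_le H B A

lemma card_biUnion_of_card_eq {a c : ℕ} {F : Fin a → Finset V}
    (hF : ∀ i j, i ≠ j → Disjoint (F i) (F j)) (hFc : ∀ i, #(F i) = c) :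
    #(univ.biUnion F) = a * c := by
  rw [card_biUnion fun i _ j _ hij => hF i j hij]
  simp [hFc]

lemma mul_edgeDensity_biUnion {a b c : ℕ} {F : Fin a → Finset V} {F' : Fin b → Finset V}
    (hF : ∀ i j, i ≠ j → Disjoint (F i) (F j)) (hF' : ∀ i j, i ≠ j → Disjoint (F' i) (F' j))
    (hFc : ∀ i, #(F i) = c) (hF'c : ∀ i, #(F' i) = c) :
    (a * b : ℝ) * H.edgeDensity (univ.biUnion F) (univ.biUnion F') =
      ∑ i, ∑ j, (H.edgeDensity (F i) (F' j) : ℝ) := by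
  simp only [cast_edgeDensity, hFc, hF'c, ← sum_div]
  rw [card_biUnion_of_card_eq hF hFc, card_biUnion_of_card_eq hF' hF'c,
    pairEdges_biUnion H (fun i _ j _ hij => hF i j hij) (fun i _ j _ hij => hF' i j hij)]
  push_cast
  obtain hab | hab := eq_or_ne ((a : ℝ) * b) 0
  · obtain rfl | rfl : a = 0 ∨ b = 0 := by exact_mod_cast mul_eq_zero.1 hab
    all_goals simp
  · rw [mul_div_assoc', show (a * c * (b * c) : ℝ) = a * b * (c * c) by ring,
      mul_div_mul_left _ _ hab]

lemma cast_pairEdges_eq_edgeDensity_mul (A B : Finset V) :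
    (pairEdges H A B : ℝ) = H.edgeDensity A B * (#A * #B) := by
  obtain h | h := eq_or_ne ((#A : ℝ) * #B) 0
  · have hle : pairEdges H A B ≤ #A * #B := SimpleGraph.card_interedges_le_mul H A B
    rw [h, mul_zero]
    exact_mod_cast Nat.le_zero.1 (hle.trans_eq (by exact_mod_cast h))
  · rw [cast_edgeDensity, div_mul_cancel₀ _ h]

lemma exists_edgeDensity_le_of_pairwiseDisjoint {𝒞₁ 𝒞₂ : Finset (Finset V)} {U₁ U₂ : Finset V}
    (hsub₁ : ∀ B ∈ 𝒞₁, B ⊆ U₁) (hsub₂ : ∀ B ∈ 𝒞₂, B ⊆ U₂)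
    (hdisj₁ : (𝒞₁ : Set (Finset V)).PairwiseDisjoint id)
    (hdisj₂ : (𝒞₂ : Set (Finset V)).PairwiseDisjoint id) (hne₁ : 𝒞₁.Nonempty) (hne₂ : 𝒞₂.Nonempty)
    {ε : ℝ} (hε : 0 ≤ ε)
    (h : (pairEdges H U₁ U₂ : ℝ) ≤ ε * (∑ B ∈ 𝒞₁, (#B : ℝ)) * ∑ B ∈ 𝒞₂, (#B : ℝ)) :
    ∃ B₁ ∈ 𝒞₁, ∃ B₂ ∈ 𝒞₂, (H.edgeDensity B₁ B₂ : ℝ) ≤ ε := by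
  have hsum : ∑ p ∈ 𝒞₁ ×ˢ 𝒞₂, (pairEdges H p.1 p.2 : ℝ) ≤ ∑ p ∈ 𝒞₁ ×ˢ 𝒞₂, ε * #p.1 * #p.2 := by
    calc ∑ p ∈ 𝒞₁ ×ˢ 𝒞₂, (pairEdges H p.1 p.2 : ℝ)
        = pairEdges H (𝒞₁.biUnion id) (𝒞₂.biUnion id) := by
          rw [pairEdges_biUnion H hdisj₁ hdisj₂, sum_product]
          push_cast
          rfl
      _ ≤ pairEdges H U₁ U₂ := by
          exact_mod_cast card_le_card (SimpleGraph.interedges_mono H (biUnion_subset.2 hsub₁)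
            (biUnion_subset.2 hsub₂))
      _ ≤ ε * (∑ B ∈ 𝒞₁, (#B : ℝ)) * ∑ B ∈ 𝒞₂, (#B : ℝ) := h
      _ = ∑ p ∈ 𝒞₁ ×ˢ 𝒞₂, ε * #p.1 * #p.2 := by
          rw [sum_product, mul_assoc, sum_mul_sum, mul_sum]
          simp only [mul_sum, mul_assoc]
  obtain ⟨⟨B₁, B₂⟩, hB, hle⟩ := exists_le_of_sum_le (hne₁.product hne₂) hsum
  rw [mem_product] at hB
  refine ⟨B₁, hB.1, B₂, hB.2, ?_⟩
  rw [cast_edgeDensity]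
  exact div_le_of_le_mul₀ (by positivity) hε (by linarith)

end EdgeCounts

section DensitySum

variable {V : Type*} (H : SimpleGraph V) {k : ℕ}

/-- Unlike `seqDensity`, this stays meaningful when the parts have different sizes, which lets
the parts be shrunk one at a time. -/
noncomputable def densitySum (W : Fin k → Finset V) : ℝ :=
  pairSum fun p q => (H.edgeDensity (W p) (W q) : ℝ)

lemma sum_densitySum_update_erase_le (W : Fin k → Finset V) (j : Fin k) :
    ∑ x ∈ W j, densitySum H (Function.update W j ((W j).erase x)) ≤ #(W j) * densitySum H W := by
  simp only [densitySum, pairSum]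
  rw [sum_comm, mul_sum]
  refine sum_le_sum fun p hp => ?_
  have hpq : p.1 ≠ p.2 := (mem_filter.1 hp).2.ne
  by_cases h₁ : p.1 = j
  · subst h₁
    simpa [Function.update_of_ne hpq.symm] using sum_edgeDensity_erase_left_le H _ _
  by_cases h₂ : p.2 = j
  · subst h₂
    simpa [Function.update_of_ne hpq] using sum_edgeDensity_erase_right_le H _ _
  · simp [Function.update_of_ne h₁, Function.update_of_ne h₂]

lemma exists_densitySum_update_erase_le (W : Fin k → Finset V) {j : Fin k} (hj : (W j).Nonempty) :
    ∃ x ∈ W j, densitySum H (Function.update W j ((W j).erase x)) ≤ densitySum H W := by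
  refine exists_le_of_sum_le hj ?_
  rw [sum_const, nsmul_eq_mul]
  exact sum_densitySum_update_erase_le H W j

lemma exists_densitySum_le_of_le_card (W : Fin k → Finset V) {c : ℕ} (hc : ∀ a, c ≤ #(W a)) :
    ∃ W' : Fin k → Finset V, (∀ a, W' a ⊆ W a) ∧ (∀ a, #(W' a) = c) ∧
      densitySum H W' ≤ densitySum H W := by
  induction hn : ∑ a, #(W a) using Nat.strong_induction_on generalizing W with
  | _ n ih =>
  by_cases hall : ∀ a, #(W a) = c
  · exact ⟨W, fun _ => subset_rfl, hall, le_rfl⟩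
  obtain ⟨j, hj⟩ := not_forall.1 hall
  have hjc : c < #(W j) := (hc j).lt_of_ne' hj
  obtain ⟨x, hx, hle⟩ := exists_densitySum_update_erase_le H W (j := j) (card_pos.1 (by omega))
  set W₁ := Function.update W j ((W j).erase x)
  have hsub : ∀ a, W₁ a ⊆ W a := fun a => by
    by_cases h : a = j
    · subst h
      simpa [W₁] using erase_subset x (W a)
    · simp [W₁, Function.update_of_ne h]
  have hcard₁ : ∀ a, c ≤ #(W₁ a) := fun a => by
    by_cases h : a = j
    · subst h
      simpa [W₁, card_erase_of_mem hx] using Nat.le_sub_one_of_lt hjc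
    · simpa [W₁, Function.update_of_ne h] using hc a
  have hlt : ∑ a, #(W₁ a) < n := hn ▸ sum_lt_sum (fun a _ => card_le_card (hsub a))
    ⟨j, mem_univ _, by simpa [W₁] using card_erase_lt_of_mem hx⟩
  obtain ⟨W', hW'sub, hW'card, hW'le⟩ := ih _ hlt W₁ hcard₁ rfl
  exact ⟨W', fun a => (hW'sub a).trans (hsub a), hW'card, hW'le.trans hle⟩

lemma seqDensity_eq_densitySum_div (W : Fin k → Finset V) {c : ℕ} (hc : ∀ a, #(W a) = c) :
    seqDensity H W = densitySum H W / numPairs k := by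
  have hnum : densitySum H W = pairSum (fun p q => (pairEdges H (W p) (W q) : ℝ)) / (c * c) := by
    simp only [densitySum, cast_edgeDensity, hc, pairSum, sum_div]
  have hden : pairSum (fun p q => ((#(W p) : ℝ) * #(W q))) = numPairs k * (c * c) := by
    simp only [hc, pairSum_const, nsmul_eq_mul]
  rw [hnum, div_div, mul_comm _ (numPairs k : ℝ), ← hden]
  rfl

lemma seqDensity_le_iff_densitySum_le (W : Fin k → Finset V) {c : ℕ} (hc : ∀ a, #(W a) = c)
    {ε : ℝ} (hε : 0 ≤ ε) : seqDensity H W ≤ ε ↔ densitySum H W ≤ ε * numPairs k := by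
  rw [seqDensity_eq_densitySum_div H W hc]
  obtain hk | hk := Nat.eq_zero_or_pos (numPairs k)
  · simp [hk, hε, densitySum, pairSum_eq_zero_of_numPairs_eq_zero _ hk]
  · exact div_le_iff₀ (by exact_mod_cast hk)

end DensitySum

section SparseFamily

variable {V : Type*}

structure IsSparseFamily (H : SimpleGraph V) (U : Finset V) (c : ℕ) (ε : ℝ) {k : ℕ}
    (W : Fin k → Finset V) : Prop where
  subset : ∀ a, W a ⊆ U
  disjoint : ∀ a b, a ≠ b → Disjoint (W a) (W b)
  card_eq : ∀ a, #(W a) = c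
  seqDensity_le : seqDensity H W ≤ ε

namespace IsSparseFamily

variable {H : SimpleGraph V} {U : Finset V} {c : ℕ} {ε : ℝ} {k : ℕ} {W : Fin k → Finset V}

lemma mono {U' : Finset V} (h : IsSparseFamily H U c ε W) (hU : U ⊆ U') :
    IsSparseFamily H U' c ε W :=
  ⟨fun a => (h.subset a).trans hU, h.disjoint, h.card_eq, h.seqDensity_le⟩

lemma exists_edgeDensity_le (h : IsSparseFamily H U c ε W) (hk : 2 ≤ k) :
    ∃ a b, a ≠ b ∧ (H.edgeDensity (W a) (W b) : ℝ) ≤ ε := by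
  have hmem : ((⟨0, by omega⟩, ⟨1, by omega⟩) : Fin k × Fin k) ∈
      univ.filter (fun p : Fin k × Fin k => p.1 < p.2) := by
    simp [Fin.mk_lt_mk]
  have hle := h.seqDensity_le
  rw [seqDensity_eq_densitySum_div H W h.card_eq,
    div_le_iff₀ (by exact_mod_cast card_pos.2 ⟨_, hmem⟩), numPairs, ← nsmul_eq_mul', ← sum_const,
    densitySum, pairSum] at hle
  obtain ⟨p, hp, hle⟩ := exists_le_of_sum_le ⟨_, hmem⟩ hle
  exact ⟨p.1, p.2, (mem_filter.1 hp).2.ne, hle⟩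

lemma exists_shrink (h : IsSparseFamily H U c ε W) {c' : ℕ} (hc : c' ≤ c) :
    ∃ W' : Fin k → Finset V, IsSparseFamily H U c' ε W' := by
  obtain ⟨W', hsub, hcard, hle⟩ :=
    exists_densitySum_le_of_le_card H W (c := c') fun a => h.card_eq a ▸ hc
  refine ⟨W', fun a => (hsub a).trans (h.subset a),
    fun a b hab => (h.disjoint a b hab).mono (hsub a) (hsub b), hcard, ?_⟩
  calc seqDensity H W' = densitySum H W' / numPairs k := seqDensity_eq_densitySum_div H W' hcard
    _ ≤ densitySum H W / numPairs k := div_le_div_of_nonneg_right hle (Nat.cast_nonneg _)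
    _ = seqDensity H W := (seqDensity_eq_densitySum_div H W h.card_eq).symm
    _ ≤ ε := h.seqDensity_le

lemma append {k' : ℕ} {W' : Fin k' → Finset V} (h : IsSparseFamily H U c ε W)
    (h' : IsSparseFamily H U c ε W') (hdisj : Disjoint (univ.biUnion W) (univ.biUnion W'))
    (hd : (H.edgeDensity (univ.biUnion W) (univ.biUnion W') : ℝ) ≤ ε) (hε : 0 ≤ ε) :
    IsSparseFamily H U c ε (Fin.append W W') := by
  have hcross : ∀ a b, Disjoint (W a) (W' b) := fun a b =>
    hdisj.mono (subset_biUnion_of_mem W (mem_univ a)) (subset_biUnion_of_mem W' (mem_univ b))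
  have hcard : ∀ x, #(Fin.append W W' x) = c :=
    Fin.addCases (by simp [h.card_eq]) (by simp [h'.card_eq])
  refine ⟨Fin.addCases (by simp [h.subset]) (by simp [h'.subset]), ?_, hcard, ?_⟩
  · intro x y
    refine Fin.addCases (fun a => ?_) (fun a => ?_) x <;>
      refine Fin.addCases (fun b => ?_) (fun b => ?_) y
    · simpa [Fin.castAdd_inj] using h.disjoint a b
    · simpa using fun _ => hcross a b
    · simpa using fun _ => (hcross b a).symm
    · simpa [Fin.natAdd_inj] using h'.disjoint a b
  · have hW := (seqDensity_le_iff_densitySum_le H W h.card_eq hε).1 h.seqDensity_le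
    have hW' := (seqDensity_le_iff_densitySum_le H W' h'.card_eq hε).1 h'.seqDensity_le
    have hmix := mul_edgeDensity_biUnion H h.disjoint h'.disjoint h.card_eq h'.card_eq
    have hd' := mul_le_mul_of_nonneg_left hd (by positivity : (0 : ℝ) ≤ k * k')
    rw [seqDensity_le_iff_densitySum_le H _ hcard hε, densitySum, pairSum_append, numPairs_add]
    simp only [densitySum, Fin.append_left, Fin.append_right] at hW hW' ⊢
    push_cast
    linarith

end IsSparseFamily

end SparseFamily

section SparseSystem

variable {V : Type*} {r : ℕ}

/-- The families `W_{i,1}, …, W_{i,tᵢ}` in the definition of `IsSparse`, each bundled with its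
length `tᵢ` so that a single family can be replaced by `Function.update`. -/
structure IsSparseSystem (G : Fin r → SimpleGraph V) (U : Finset V) (c : ℕ) (ε : ℝ) (t : ℕ)
    (S : Fin r → Σ k : ℕ, Fin k → Finset V) : Prop where
  pos : ∀ i, 0 < (S i).1
  le_prod : t ≤ ∏ i, (S i).1
  family : ∀ i, IsSparseFamily (G i) U c ε (S i).2

lemma isSparse_iff [Fintype V] (G : Fin r → SimpleGraph V) (α ρ ε : ℝ) (t : ℕ) :
    IsSparse G α ρ ε t ↔ ∀ U : Finset V, α * Fintype.card V ≤ #U →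
      ∃ S, IsSparseSystem G U ⌈ρ * #U⌉₊ ε t S := by
  refine forall_congr' fun U => imp_congr_right fun _ => ⟨?_, ?_⟩
  · rintro ⟨ts, hpos, hprod, hW⟩
    choose W hW using hW
    exact ⟨fun i => ⟨ts i, W i⟩, hpos, hprod, fun i => ⟨(hW i).1, (hW i).2.1, (hW i).2.2.1,
      (hW i).2.2.2⟩⟩
  · rintro ⟨S, hpos, hprod, hS⟩
    exact ⟨fun i => (S i).1, hpos, hprod, fun i => ⟨(S i).2, (hS i).subset, (hS i).disjoint,
      (hS i).card_eq, (hS i).seqDensity_le⟩⟩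

lemma exists_isSparseSystem_zero (G : Fin r → SimpleGraph V) (U : Finset V) {ε : ℝ} {t : ℕ}
    (i₀ : Fin r) (ht : 0 < t) (hε : 0 ≤ ε) :
    ∃ S, IsSparseSystem G U 0 ε t S := by
  refine ⟨fun i => ⟨(Pi.mulSingle i₀ t : Fin r → ℕ) i, fun _ => ∅⟩, fun i => ?_, by simp,
    fun i => ?_⟩
  · by_cases h : i = i₀
    · simp [h, ht]
    · simp [h]
  · refine ⟨fun _ => empty_subset U, fun _ _ _ => disjoint_empty_left _, fun _ => card_empty, ?_⟩
    simpa [seqDensity, pairEdges] using hε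

namespace IsSparseSystem

variable {G : Fin r → SimpleGraph V} {U : Finset V} {c : ℕ} {ε : ℝ} {t : ℕ}
  {S : Fin r → Σ k : ℕ, Fin k → Finset V}

lemma mono {U' : Finset V} (hS : IsSparseSystem G U c ε t S) (hU : U ⊆ U') :
    IsSparseSystem G U' c ε t S :=
  ⟨hS.pos, hS.le_prod, fun i => (hS.family i).mono hU⟩

lemma exists_shrink (hS : IsSparseSystem G U c ε t S) {c' : ℕ} (hc : c' ≤ c) :
    ∃ S', IsSparseSystem G U c' ε t S' := by
  choose W hW using fun i => (hS.family i).exists_shrink hc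
  exact ⟨fun i => ⟨(S i).1, W i⟩, hS.pos, hS.le_prod, hW⟩

lemma update_append (hS : IsSparseSystem G U c ε t S) {i₀ : Fin r} {b : ℕ} {F : Fin b → Finset V}
    (hF : IsSparseFamily (G i₀) U c ε F) (hb : (S i₀).1 ≤ b)
    (hdisj : Disjoint (univ.biUnion (S i₀).2) (univ.biUnion F))
    (hd : ((G i₀).edgeDensity (univ.biUnion (S i₀).2) (univ.biUnion F) : ℝ) ≤ ε) (hε : 0 ≤ ε) :
    IsSparseSystem G U c ε (2 * t)
      (Function.update S i₀ ⟨(S i₀).1 + b, Fin.append (S i₀).2 F⟩) := by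
  refine ⟨fun i => ?_, ?_, fun i => ?_⟩
  · rcases eq_or_ne i i₀ with rfl | h
    · simpa using Nat.add_pos_left (hS.pos i) b
    · simpa [Function.update_of_ne h] using hS.pos i
  · have hprod := hS.le_prod
    rw [← mul_prod_erase univ _ (mem_univ i₀)] at hprod ⊢
    rw [Function.update_self, prod_congr rfl fun i hi =>
      congrArg Sigma.fst (Function.update_of_ne (ne_of_mem_erase hi) _ S)]
    have := Nat.mul_le_mul_right (∏ i ∈ univ.erase i₀, (S i).1) hb
    rw [add_mul]
    omega
  · rcases eq_or_ne i i₀ with rfl | h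
    · rw [Function.update_self]
      exact (hS.family i).append hF hdisj hd hε
    · rw [Function.update_of_ne h]
      exact hS.family i

end IsSparseSystem

end SparseSystem

section Doubling

variable {V : Type*} {r : ℕ} {G : Fin r → SimpleGraph V} {U : Finset V} {c w t : ℕ} {ε : ℝ}

lemma exists_pairwiseDisjoint_supports (i₀ : Fin r) (hc : 0 < c) {R : Finset V} (hRU : R ⊆ U)
    (hsys : ∀ W ⊆ U, #W = w → ∃ S, IsSparseSystem G W c ε t S) (hw : w ≤ #R) :
    ∃ 𝒞 : Finset (Finset V),
      (∀ B ∈ 𝒞, B ⊆ R ∧ ∃ S, IsSparseSystem G U c ε t S ∧ univ.biUnion (S i₀).2 = B) ∧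
      (𝒞 : Set (Finset V)).PairwiseDisjoint id ∧ 𝒞.Nonempty ∧ #R + 1 ≤ w + ∑ B ∈ 𝒞, #B := by
  obtain ⟨𝒞, h𝒞, hdisj, hcard⟩ := exists_pairwiseDisjoint_card_lt_add_sum
    (fun B => ∃ S, IsSparseSystem G U c ε t S ∧ univ.biUnion (S i₀).2 = B) w R
    fun W hWR hW => by
      obtain ⟨S, hS⟩ := hsys W (hWR.trans hRU) hW
      refine ⟨_, biUnion_subset.2 fun j _ => (hS.family i₀).subset j, ?_, S,
        hS.mono (hWR.trans hRU), rfl⟩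
      exact biUnion_nonempty.2 ⟨⟨0, hS.pos i₀⟩, mem_univ _,
        card_pos.1 (((hS.family i₀).card_eq _).symm ▸ hc)⟩
  exact ⟨𝒞, h𝒞, hdisj, nonempty_of_sum_ne_zero (f := card) (by omega), hcard⟩

theorem exists_isSparseSystem_two_mul {U₁ U₂ : Finset V} {i₀ : Fin r} {m : ℕ} (hε : 0 ≤ ε)
    (hc : 0 < c) (hU₁ : U₁ ⊆ U) (hU₂ : U₂ ⊆ U) (hU₁₂ : Disjoint U₁ U₂) (hm₁ : #U₁ = m)
    (hm₂ : #U₂ = m) (hd : ((G i₀).edgeDensity U₁ U₂ : ℝ) ≤ ε / 4) (hwm : w ≤ m)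
    (hw : 2 * w ≤ m + 2) (hsys : ∀ W ⊆ U, #W = w → ∃ S, IsSparseSystem G W c ε t S) :
    ∃ S, IsSparseSystem G U c ε (2 * t) S := by
  obtain ⟨𝒞₁, h𝒞₁, hdisj₁, hne₁, hcard₁⟩ := exists_pairwiseDisjoint_supports i₀ hc hU₁ hsys (hm₁ ▸ hwm)
  obtain ⟨𝒞₂, h𝒞₂, hdisj₂, hne₂, hcard₂⟩ := exists_pairwiseDisjoint_supports i₀ hc hU₂ hsys (hm₂ ▸ hwm)
  have hmass₁ : (m : ℝ) ≤ 2 * ∑ B ∈ 𝒞₁, (#B : ℝ) := by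
    exact_mod_cast (by omega : m ≤ 2 * ∑ B ∈ 𝒞₁, #B)
  have hmass₂ : (m : ℝ) ≤ 2 * ∑ B ∈ 𝒞₂, (#B : ℝ) := by
    exact_mod_cast (by omega : m ≤ 2 * ∑ B ∈ 𝒞₂, #B)
  have hedges : (pairEdges (G i₀) U₁ U₂ : ℝ) ≤
      ε * (∑ B ∈ 𝒞₁, (#B : ℝ)) * ∑ B ∈ 𝒞₂, (#B : ℝ) :=
    calc (pairEdges (G i₀) U₁ U₂ : ℝ) = (G i₀).edgeDensity U₁ U₂ * (m * m) := by
          rw [cast_pairEdges_eq_edgeDensity_mul, hm₁, hm₂]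
      _ ≤ ε / 4 * ((2 * ∑ B ∈ 𝒞₁, (#B : ℝ)) * (2 * ∑ B ∈ 𝒞₂, (#B : ℝ))) := by
          gcongr
      _ = ε * (∑ B ∈ 𝒞₁, (#B : ℝ)) * ∑ B ∈ 𝒞₂, (#B : ℝ) := by ring
  obtain ⟨B₁, hB₁, B₂, hB₂, hB⟩ := exists_edgeDensity_le_of_pairwiseDisjoint (G i₀)
    (fun B hB => (h𝒞₁ B hB).1) (fun B hB => (h𝒞₂ B hB).1) hdisj₁ hdisj₂ hne₁ hne₂ hε hedges
  obtain ⟨hB₁U₁, S₁, hS₁, rfl⟩ := h𝒞₁ B₁ hB₁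
  obtain ⟨hB₂U₂, S₂, hS₂, rfl⟩ := h𝒞₂ B₂ hB₂
  have hdisj := hU₁₂.mono hB₁U₁ hB₂U₂
  rcases le_total (S₁ i₀).1 (S₂ i₀).1 with h | h
  · exact ⟨_, hS₁.update_append (hS₂.family i₀) h hdisj hB hε⟩
  · exact ⟨_, hS₂.update_append (hS₁.family i₀) h hdisj.symm
      (by rwa [SimpleGraph.edgeDensity_comm]) hε⟩

end Doubling

theorem stmt9_general {V : Type*} [Fintype V] {r : ℕ} (G : Fin r → SimpleGraph V)
    (α ρ ρ' ε : ℝ) (t : ℕ)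
    (hρ : ρ ∈ Set.Icc (0 : ℝ) 1)
    (hρ' : ρ' ∈ Set.Icc (0 : ℝ) 1) (hε : ε ∈ Set.Icc (0 : ℝ) 1) (ht : 0 < t)
    (h1 : IsSparse G (α * ρ / 2) ρ' ε t)
    (h2 : IsSparse G α ρ (ε / 4) 2) :
    IsSparse G α (ρ * ρ' / 2) ε (2 * t) := by
  rw [isSparse_iff] at h1 h2 ⊢
  intro U hU
  obtain ⟨S, hS⟩ := h2 U hU
  obtain ⟨i₀, hi₀⟩ := exists_two_le_of_two_le_prod hS.le_prod
  obtain ⟨a, b, hab, hd⟩ := (hS.family i₀).exists_edgeDensity_le hi₀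
  obtain hs | hs := Nat.eq_zero_or_pos ⌈ρ * ρ' / 2 * #U⌉₊
  · rw [hs]
    exact exists_isSparseSystem_zero G U i₀ (by omega) hε.1
  have hρU : 0 ≤ ρ * #U := mul_nonneg hρ.1 (Nat.cast_nonneg _)
  set w := ⌈ρ * #U / 2⌉₊
  have hw : ρ * #U / 2 ≤ w := Nat.le_ceil _
  have hsw : ⌈ρ * ρ' / 2 * #U⌉₊ ≤ ⌈ρ' * w⌉₊ :=
    Nat.ceil_mono (by nlinarith [hρ'.1])
  obtain ⟨S', hS'⟩ := exists_isSparseSystem_two_mul (c := ⌈ρ' * w⌉₊) (w := w) hε.1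
    (hs.trans_le hsw) ((hS.family i₀).subset a) ((hS.family i₀).subset b)
    ((hS.family i₀).disjoint a b hab) ((hS.family i₀).card_eq a) ((hS.family i₀).card_eq b) hd
    (Nat.ceil_mono (half_le_self hρU)) (two_mul_ceil_half_le hρU) fun W _ hW => by
      simpa [hW] using h1 W (by rw [hW]; nlinarith [hρ.1])
  exact hS'.exists_shrink hsw

theorem stmt9 {V : Type*} [Fintype V] {r : ℕ} (G : Fin r → SimpleGraph V)
    (α ρ ρ' ε : ℝ) (t : ℕ)
    (hα : α ∈ Set.Icc (0 : ℝ) 1) (hρ : ρ ∈ Set.Icc (0 : ℝ) 1)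
    (hρ' : ρ' ∈ Set.Icc (0 : ℝ) 1) (hε : ε ∈ Set.Icc (0 : ℝ) 1) (ht : 0 < t)
    (h1 : IsSparse G (α * ρ / 2) ρ' ε t)
    (h2 : IsSparse G α ρ (ε / 4) 2) :
    IsSparse G α (ρ * ρ' / 2) ε (2 * t) :=
  stmt9_general G α ρ ρ' ε t hρ hρ' hε ht h1 h2
end
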